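/- Let ℓ ≥ 1, n ≥ ℓ+1, and let C be a family of (ℓ+1)-element subsets of [n] satisfying condition (C_{ℓ+1}) which is not equal to the family of all (ℓ+1)-element subsets of [n]. Then the collection I = { I ⊆ [n] : |I| ≤ ℓ+1 and I ∉ C } is the family of independent sets of a matroid on [n] of rank ℓ+1; in particular I satisfies the independence augmentation axiom: for I₁, I₂ ∈ I with |I₂| = |I₁| + 1 there exists e ∈ I₂ \ I₁ with I₁ ∪ {e} ∈ I. -/

import Mathlib

noncomputable section

/-- `C` is a circuit of the matroid `M`: a minimal dependent subset of the ground set. -/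
def IsCircuitF (M : Matroid ℕ) (C : Finset ℕ) : Prop :=
  ↑C ⊆ M.E ∧ ¬ M.Indep ↑C ∧ ∀ x ∈ C, M.Indep ↑(C.erase x)

/-- `M` is `ℓ`-generic: it has no circuits of cardinality at most `ℓ`. -/
def GenericM (ℓ : ℕ) (M : Matroid ℕ) : Prop :=
  ∀ C : Finset ℕ, IsCircuitF M C → ℓ < C.card

/-- `M` has rank `r`: it has a base of cardinality `r`. -/
def HasRank (M : Matroid ℕ) (r : ℕ) : Prop :=
  ∃ B : Finset ℕ, M.IsBase ↑B ∧ B.card = r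

/-- Condition `(C_{ℓ+1})` for a family `𝒞` of `(ℓ+1)`-element subsets:  whenever
`C₁, C₂ ∈ 𝒞` and `|C₁ ∪ C₂| = ℓ+2`, every `(ℓ+1)`-element subset of `C₁ ∪ C₂` is in `𝒞`. -/
def CondC (ℓ : ℕ) (𝒞 : Set (Finset ℕ)) : Prop :=
  ∀ C₁ ∈ 𝒞, ∀ C₂ ∈ 𝒞, (C₁ ∪ C₂).card = ℓ + 2 →
    ∀ C₃ : Finset ℕ, C₃ ⊆ C₁ ∪ C₂ → C₃.card = ℓ + 1 → C₃ ∈ 𝒞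

end

/-!
Augmenting `I` with `|I| = ℓ` from `J ∉ 𝒞` with `|J| = ℓ + 1` cannot fail: otherwise every set
`insert e I` with `e ∈ J \ I` lies in `𝒞`, and condition `(C_{ℓ+1})` propagates membership to every
`(ℓ+1)`-subset of `I ∪ J`, by induction on the number of elements outside `I`: a set `A` with at
least two such elements `e ≠ f` is an `(ℓ+1)`-subset of the union of the two sets obtained from `A`
by swapping `e`, resp. `f`, for a point of `I \ A`. In particular `J ∈ 𝒞`, a contradiction.
Below rank `ℓ + 1` augmentation is free, since every member of `𝒞` has `ℓ + 1` elements.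
-/

open Finset

theorem eq_insert_of_sdiff_eq_singleton {α : Type*} [DecidableEq α] {A I : Finset α} {e : α}
    (h : A \ I = {e}) (hcard : I.card + 1 ≤ A.card) : A = insert e I := by
  refine eq_of_subset_of_card_le (fun y hy => ?_) ((card_insert_le e I).trans hcard)
  by_cases hyI : y ∈ I
  · exact mem_insert_of_mem hyI
  · have hy' : y ∈ A \ I := mem_sdiff.mpr ⟨hy, hyI⟩
    rw [h, mem_singleton] at hy'
    exact hy' ▸ mem_insert_self y I

namespace CondC

variable {ℓ : ℕ} {𝒞 : Set (Finset ℕ)}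

theorem mem_of_swaps_mem (hcond : CondC ℓ 𝒞) {A : Finset ℕ} {x e f : ℕ}
    (hA : A.card = ℓ + 1) (hx : x ∉ A) (hef : e ≠ f)
    (hAe : insert x (A.erase e) ∈ 𝒞) (hAf : insert x (A.erase f) ∈ 𝒞) : A ∈ 𝒞 := by
  have hunion : insert x (A.erase e) ∪ insert x (A.erase f) = insert x A := by
    ext y
    simp only [mem_union, mem_insert, mem_erase]
    by_cases hye : y = e <;> by_cases hyf : y = f <;> simp_all
  refine hcond _ hAe _ hAf ?_ A ?_ hA
  · rw [hunion, card_insert_of_notMem hx, hA]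
  · rw [hunion]
    exact subset_insert x A

theorem mem_of_subset_union (hcond : CondC ℓ 𝒞) {I J : Finset ℕ} (hI : I.card = ℓ)
    (hins : ∀ e ∈ J \ I, insert e I ∈ 𝒞) :
    ∀ A ⊆ I ∪ J, A.card = ℓ + 1 → A ∈ 𝒞 := by
  suffices h : ∀ j, ∀ A ⊆ I ∪ J, A.card = ℓ + 1 → (A \ I).card = j + 1 → A ∈ 𝒞 by
    intro A hAIJ hA
    have hout : 0 < (A \ I).card :=
      card_pos.mpr (sdiff_nonempty.mpr fun hAI => by have := card_le_card hAI; omega)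
    exact h _ A hAIJ hA (Nat.succ_pred_eq_of_pos hout).symm
  intro j
  induction j with
  | zero =>
    intro A hAIJ hA hout
    obtain ⟨e, he⟩ := card_eq_one.mp hout
    obtain ⟨heA, heI⟩ := mem_sdiff.mp (he ▸ mem_singleton_self e : e ∈ A \ I)
    rw [eq_insert_of_sdiff_eq_singleton he (by omega)]
    exact hins e (mem_sdiff.mpr ⟨(mem_union.mp (hAIJ heA)).resolve_left heI, heI⟩)
  | succ j ih =>
    intro A hAIJ hA hout
    obtain ⟨e, he, f, hf, hef⟩ := one_lt_card.mp (by omega : 1 < (A \ I).card)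
    obtain ⟨x, hxI, hxA⟩ : ∃ x ∈ I, x ∉ A := not_subset.mp fun hIA => by
      have := card_sdiff_of_subset hIA
      omega
    have hswap : ∀ g ∈ A \ I, insert x (A.erase g) ∈ 𝒞 := by
      intro g hg
      have hgA := (mem_sdiff.mp hg).1
      refine ih _ (insert_subset (mem_union_left J hxI) ((erase_subset g A).trans hAIJ)) ?_ ?_
      · rw [card_insert_of_notMem fun h => hxA (mem_of_mem_erase h), card_erase_of_mem hgA, hA]
        rfl
      · rw [insert_sdiff_of_mem _ hxI, erase_sdiff_comm, card_erase_of_mem hg, hout]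
        rfl
    exact hcond.mem_of_swaps_mem hA hxA hef (hswap e he) (hswap f hf)

theorem exists_insert_notMem (hcond : CondC ℓ 𝒞) {I J : Finset ℕ} (hI : I.card = ℓ)
    (hJ : J.card = ℓ + 1) (hJ𝒞 : J ∉ 𝒞) : ∃ e ∈ J \ I, insert e I ∉ 𝒞 := by
  by_contra! hins
  exact hJ𝒞 (hcond.mem_of_subset_union hI hins J subset_union_right hJ)

end CondC

/-- Independence in the paving matroid of rank `ℓ + 1` on `E` whose circuits of size `ℓ + 1` are
the members of `𝒞`. -/
def PavingIndep (E : Finset ℕ) (ℓ : ℕ) (𝒞 : Set (Finset ℕ)) (S : Finset ℕ) : Prop :=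
  S ⊆ E ∧ S.card ≤ ℓ + 1 ∧ S ∉ 𝒞

namespace PavingIndep

variable {E : Finset ℕ} {ℓ : ℕ} {𝒞 : Set (Finset ℕ)}

theorem empty (h𝒞 : ∀ C ∈ 𝒞, C.card = ℓ + 1) : PavingIndep E ℓ 𝒞 ∅ :=
  ⟨empty_subset E, by simp, fun h => by simpa using h𝒞 _ h⟩

theorem subset (h𝒞 : ∀ C ∈ 𝒞, C.card = ℓ + 1) {I J : Finset ℕ}
    (hJ : PavingIndep E ℓ 𝒞 J) (hIJ : I ⊆ J) : PavingIndep E ℓ 𝒞 I := by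
  obtain ⟨hJE, hJcard, hJ𝒞⟩ := hJ
  have hIcard := card_le_card hIJ
  refine ⟨hIJ.trans hJE, hIcard.trans hJcard, fun hI => hJ𝒞 ?_⟩
  rwa [← eq_of_subset_of_card_le hIJ (by have := h𝒞 I hI; omega)]

theorem exists_insert_of_card_lt (h𝒞 : ∀ C ∈ 𝒞, C.card = ℓ + 1) (hcond : CondC ℓ 𝒞)
    {I J : Finset ℕ} (hI : PavingIndep E ℓ 𝒞 I) (hJ : PavingIndep E ℓ 𝒞 J)
    (hIJ : I.card < J.card) : ∃ e ∈ J, e ∉ I ∧ PavingIndep E ℓ 𝒞 (insert e I) := by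
  obtain ⟨hIE, hIcard, -⟩ := hI
  obtain ⟨hJE, hJcard, hJ𝒞⟩ := hJ
  obtain ⟨e, heJI, he𝒞⟩ : ∃ e ∈ J \ I, insert e I ∉ 𝒞 := by
    by_cases hIℓ : I.card < ℓ
    · obtain ⟨e, he⟩ := sdiff_nonempty.mpr fun hJI : J ⊆ I => by
        have := card_le_card hJI
        omega
      refine ⟨e, he, fun h => ?_⟩
      have := (h𝒞 _ h).symm.trans (card_insert_of_notMem (mem_sdiff.mp he).2)
      omega
    · exact hcond.exists_insert_notMem (by omega) (by omega) hJ𝒞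
  obtain ⟨heJ, heI⟩ := mem_sdiff.mp heJI
  refine ⟨e, heJ, heI, insert_subset (hJE heJ) hIE, ?_, he𝒞⟩
  rw [card_insert_of_notMem heI]
  omega

end PavingIndep

def pavingMatroid (E : Finset ℕ) (ℓ : ℕ) (𝒞 : Set (Finset ℕ))
    (h𝒞 : ∀ C ∈ 𝒞, C.card = ℓ + 1) (hcond : CondC ℓ 𝒞) : Matroid ℕ :=
  (IndepMatroid.ofFinset E (PavingIndep E ℓ 𝒞) (.empty h𝒞) (fun _ _ => .subset h𝒞)
    (fun _ _ => PavingIndep.exists_insert_of_card_lt h𝒞 hcond)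
    fun _ hI => coe_subset.mpr hI.1).matroid

section pavingMatroid

variable {E : Finset ℕ} {ℓ : ℕ} {𝒞 : Set (Finset ℕ)} (h𝒞 : ∀ C ∈ 𝒞, C.card = ℓ + 1)
  (hcond : CondC ℓ 𝒞)

theorem pavingMatroid_E : (pavingMatroid E ℓ 𝒞 h𝒞 hcond).E = ↑E := rfl

theorem pavingMatroid_indep_coe_iff {S : Finset ℕ} :
    (pavingMatroid E ℓ 𝒞 h𝒞 hcond).Indep ↑S ↔ PavingIndep E ℓ 𝒞 S := by
  simp only [pavingMatroid, IndepMatroid.matroid_Indep, IndepMatroid.ofFinset_indep]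

theorem pavingMatroid_isBase_of_card_eq {S : Finset ℕ} (hS : PavingIndep E ℓ 𝒞 S)
    (hcard : S.card = ℓ + 1) :
    (pavingMatroid E ℓ 𝒞 h𝒞 hcond).IsBase ↑S := by
  refine ((pavingMatroid_indep_coe_iff h𝒞 hcond).mpr hS).isBase_of_forall_insert
    fun e he hins => ?_
  have heS : e ∉ S := fun h => he.2 (mem_coe.mpr h)
  rw [← coe_insert, pavingMatroid_indep_coe_iff] at hins
  have := hins.2.1
  rw [card_insert_of_notMem heS] at this
  omega

end pavingMatroid

theorem independent_sets_form_matroid_general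
    (ℓ n : ℕ) (𝒞 : Set (Finset ℕ))
    (h𝒞 : ∀ C ∈ 𝒞, C ⊆ Finset.Icc 1 n ∧ C.card = ℓ + 1)
    (hcond : CondC ℓ 𝒞)
    (hne : 𝒞 ≠ {C : Finset ℕ | C ⊆ Finset.Icc 1 n ∧ C.card = ℓ + 1}) :
    (∃ M : Matroid ℕ, M.E = ↑(Finset.Icc 1 n) ∧ HasRank M (ℓ + 1) ∧
      ∀ S : Finset ℕ, M.Indep ↑S ↔
        (S ⊆ Finset.Icc 1 n ∧ S.card ≤ ℓ + 1 ∧ S ∉ 𝒞)) ∧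
    (∀ I₁ I₂ : Finset ℕ,
      I₁ ⊆ Finset.Icc 1 n → I₁.card ≤ ℓ + 1 → I₁ ∉ 𝒞 →
      I₂ ⊆ Finset.Icc 1 n → I₂.card ≤ ℓ + 1 → I₂ ∉ 𝒞 →
      I₂.card = I₁.card + 1 →
      ∃ e ∈ I₂ \ I₁, insert e I₁ ⊆ Finset.Icc 1 n ∧
        (insert e I₁).card ≤ ℓ + 1 ∧ insert e I₁ ∉ 𝒞) := by
  have h𝒞card : ∀ C ∈ 𝒞, C.card = ℓ + 1 := fun C hC => (h𝒞 C hC).2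
  obtain ⟨B, ⟨hBE, hBcard⟩, hB𝒞⟩ : ∃ B, (B ⊆ Icc 1 n ∧ B.card = ℓ + 1) ∧ B ∉ 𝒞 := by
    by_contra! hall
    exact hne (Set.ext fun C => ⟨h𝒞 C, hall C⟩)
  refine ⟨⟨pavingMatroid (Icc 1 n) ℓ 𝒞 h𝒞card hcond, pavingMatroid_E h𝒞card hcond,
    ⟨B, pavingMatroid_isBase_of_card_eq h𝒞card hcond ⟨hBE, hBcard.le, hB𝒞⟩ hBcard, hBcard⟩,
    fun S => pavingMatroid_indep_coe_iff h𝒞card hcond⟩, ?_⟩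
  intro I₁ I₂ h₁E h₁card h₁𝒞 h₂E h₂card h₂𝒞 hcard
  obtain ⟨e, heI₂, heI₁, hins⟩ := PavingIndep.exists_insert_of_card_lt h𝒞card hcond
    ⟨h₁E, h₁card, h₁𝒞⟩ ⟨h₂E, h₂card, h₂𝒞⟩ (by omega)
  exact ⟨e, mem_sdiff.mpr ⟨heI₂, heI₁⟩, hins⟩

theorem independent_sets_form_matroid
    (ℓ n : ℕ) (hℓ : 1 ≤ ℓ) (hn : ℓ + 1 ≤ n) (𝒞 : Set (Finset ℕ))
    (h𝒞 : ∀ C ∈ 𝒞, C ⊆ Finset.Icc 1 n ∧ C.card = ℓ + 1)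
    (hcond : CondC ℓ 𝒞)
    (hne : 𝒞 ≠ {C : Finset ℕ | C ⊆ Finset.Icc 1 n ∧ C.card = ℓ + 1}) :
    (∃ M : Matroid ℕ, M.E = ↑(Finset.Icc 1 n) ∧ HasRank M (ℓ + 1) ∧
      ∀ S : Finset ℕ, M.Indep ↑S ↔
        (S ⊆ Finset.Icc 1 n ∧ S.card ≤ ℓ + 1 ∧ S ∉ 𝒞)) ∧
    (∀ I₁ I₂ : Finset ℕ,
      I₁ ⊆ Finset.Icc 1 n → I₁.card ≤ ℓ + 1 → I₁ ∉ 𝒞 →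
      I₂ ⊆ Finset.Icc 1 n → I₂.card ≤ ℓ + 1 → I₂ ∉ 𝒞 →
      I₂.card = I₁.card + 1 →
      ∃ e ∈ I₂ \ I₁, insert e I₁ ⊆ Finset.Icc 1 n ∧
        (insert e I₁).card ≤ ℓ + 1 ∧ insert e I₁ ∉ 𝒞) :=
  independent_sets_form_matroid_general ℓ n 𝒞 h𝒞 hcond hne
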